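/- arXiv:2508.11604 — 3 statements merged into one kernel-verified Lean document; each statement's English description precedes it below -/
import Mathlib

section
/- Let ξ be a nonzero vector in an n-dimensional inner product space and let B : Sym²(V) → Sym²(V) be defined by Bh = -ξ ⊗ h(ξ) - h(ξ) ⊗ ξ + |ξ|² h + (tr h) ξ ⊗ ξ, where h(ξ) denotes the contraction of h with ξ. Then the kernel of B is exactly the set of symmetric tensors of the form ξ ⊗ X + X ⊗ ξ for X ∈ V. -/
open Finset in
/-- Let `ξ ≠ 0` and let `B` act on symmetric 2-tensors by
`Bh = -ξ ⊗ h(ξ) - h(ξ) ⊗ ξ + |ξ|² h + (tr h) ξ ⊗ ξ`.  Then the kernel of `B`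
(among symmetric 2-tensors) is exactly the set of tensors of the form
`ξ ⊗ X + X ⊗ ξ` with `X ∈ V`. -/
theorem stmt_6 (n : ℕ) (ξ : Fin n → ℝ) (hξ : ξ ≠ 0)
    (h : Matrix (Fin n) (Fin n) ℝ) (hsymm : h.IsSymm) :
    (∀ i j : Fin n,
        -(ξ i * (∑ k, h j k * ξ k)) - (∑ k, h i k * ξ k) * ξ j
          + (∑ k, ξ k * ξ k) * h i j + (∑ k, h k k) * (ξ i * ξ j) = 0) ↔
      ∃ X : Fin n → ℝ, ∀ i j : Fin n, h i j = ξ i * X j + X i * ξ j := by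
  have hc : (∑ k, ξ k * ξ k) ≠ 0 := by
    intro hzero
    apply hξ
    funext k
    have hnn : ∀ m ∈ Finset.univ, 0 ≤ ξ m * ξ m := fun m _ => mul_self_nonneg _
    have := (Finset.sum_eq_zero_iff_of_nonneg hnn).mp hzero k (Finset.mem_univ k)
    have := mul_self_eq_zero.mp this
    simpa using this
  set c := ∑ k, ξ k * ξ k with hcdef
  constructor
  · intro H
    refine ⟨fun i => (∑ k, h i k * ξ k) / c - (∑ k, h k k) * ξ i / (2 * c), fun i j => ?_⟩
    have Hij := H i j
    field_simp
    linear_combination 2 * Hij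
  · rintro ⟨X, hX⟩ i j
    have hsum : ∀ m : Fin n, (∑ k, h m k * ξ k) = ξ m * (∑ k, X k * ξ k) + X m * c := by
      intro m
      rw [hcdef, Finset.mul_sum, Finset.mul_sum, ← Finset.sum_add_distrib]
      exact Finset.sum_congr rfl fun k _ => by rw [hX]; ring
    have htr : (∑ k, h k k) = 2 * (∑ k, X k * ξ k) := by
      rw [Finset.mul_sum, ]
      exact Finset.sum_congr rfl fun k _ => by rw [hX]; ring
    rw [hsum i, hsum j, htr, hX i j]
    ring
end

section
/- Let C̃ be the operator on symmetric 2-tensors of an n-dimensional inner product space defined by C̃h = |ξ|² h - b|ξ|²(tr h) g + b h(ξ,ξ) g, for ξ ≠ 0 and b ∈ ℝ. If |b + 2(n-1)/n| < (2/n)√(n² - n + 1), then ⟨C̃h, h⟩ > 0 for all h ≠ 0. -/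
/-- Let `C̃h = |ξ|² h - b|ξ|²(tr h) g + b h(ξ,ξ) g` on symmetric 2-tensors of an
`n`-dimensional inner product space, with `ξ ≠ 0`.  If
`|b + 2(n-1)/n| < (2/n)√(n² - n + 1)`, then `⟨C̃h, h⟩ > 0` for all `h ≠ 0`. -/
theorem stmt_10 (n : ℕ) (hn : 0 < n) (b : ℝ)
    (hb : |b + 2 * ((n : ℝ) - 1) / n| < (2 / n) * Real.sqrt ((n : ℝ) ^ 2 - n + 1))
    (ξ : Fin n → ℝ) (hξ : ξ ≠ 0)
    (h : Matrix (Fin n) (Fin n) ℝ) (hsymm : h.IsSymm) (hne : h ≠ 0) :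
    0 < ∑ i, ∑ j,
      ((∑ k, ξ k * ξ k) * h i j
        - b * (∑ k, ξ k * ξ k) * (∑ k, h k k) * (if i = j then (1 : ℝ) else 0)
        + b * (∑ p, ∑ q, h p q * ξ p * ξ q) * (if i = j then (1 : ℝ) else 0))
      * h i j := by
  have hn' : (0:ℝ) < n := by exact_mod_cast hn
  have hn0 : (n:ℝ) ≠ 0 := ne_of_gt hn'
  set s := ∑ k, ξ k * ξ k with hs_def
  set T := ∑ k : Fin n, h k k with hT_def
  set Q := ∑ p, ∑ q, h p q * ξ p * ξ q with hQ_def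
  set F := ∑ i, ∑ j, h i j * h i j with hF_def
  -- rewrite the goal sum
  have hgoal : (∑ i, ∑ j,
      (s * h i j - b * s * T * (if i = j then (1 : ℝ) else 0)
        + b * Q * (if i = j then (1 : ℝ) else 0)) * h i j)
      = s * F - b * s * T * T + b * Q * T := by
    have inner : ∀ i, (∑ j,
        (s * h i j - b * s * T * (if i = j then (1 : ℝ) else 0)
          + b * Q * (if i = j then (1 : ℝ) else 0)) * h i j)
        = s * (∑ j, h i j * h i j) + (b * Q - b * s * T) * h i i := by
      intro i
      have e1 : ∀ j, (s * h i j - b * s * T * (if i = j then (1 : ℝ) else 0)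
          + b * Q * (if i = j then (1 : ℝ) else 0)) * h i j
          = s * (h i j * h i j) + (b * Q - b * s * T) * (if i = j then h i j else 0) := by
        intro j; split <;> ring
      rw [Finset.sum_congr rfl fun j _ => e1 j, Finset.sum_add_distrib,
        ← Finset.mul_sum, ← Finset.mul_sum, Finset.sum_ite_eq]
      simp
    rw [Finset.sum_congr rfl fun i _ => inner i, Finset.sum_add_distrib,
      ← Finset.mul_sum, ← Finset.mul_sum, ← hF_def, ← hT_def]
    ring
  rw [hgoal]
  -- positivity of s
  have hs : 0 < s := by
    obtain ⟨k, hk⟩ := Function.ne_iff.mp hξ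
    exact Finset.sum_pos' (fun i _ => mul_self_nonneg _)
      ⟨k, Finset.mem_univ k, mul_self_pos.mpr hk⟩
  -- positivity of F
  have hF : 0 < F := by
    have : ∃ i j, h i j ≠ 0 := by
      by_contra hc; push_neg at hc
      exact hne (Matrix.ext fun i j => hc i j)
    obtain ⟨i, j, hij⟩ := this
    refine Finset.sum_pos' (fun i _ => Finset.sum_nonneg fun j _ => mul_self_nonneg _)
      ⟨i, Finset.mem_univ i, Finset.sum_pos' (fun j _ => mul_self_nonneg _)
        ⟨j, Finset.mem_univ j, mul_self_pos.mpr hij⟩⟩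
  -- the coefficient condition
  have hK : (n:ℝ) * b ^ 2 + 4 * ((n:ℝ) - 1) * b - 4 < 0 := by
    have h1 : (b + 2 * ((n : ℝ) - 1) / n) ^ 2 < ((2 / n) * Real.sqrt ((n : ℝ) ^ 2 - n + 1)) ^ 2 := by
      nlinarith [abs_nonneg (b + 2 * ((n : ℝ) - 1) / n), sq_abs (b + 2 * ((n : ℝ) - 1) / n), hb]
    have h2 : Real.sqrt ((n : ℝ) ^ 2 - n + 1) ^ 2 = (n : ℝ) ^ 2 - n + 1 := by
      rw [Real.sq_sqrt]; nlinarith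
    rw [mul_pow, h2] at h1
    have h3 : (b + 2 * ((n : ℝ) - 1) / n) ^ 2
        = b ^ 2 + 4 * ((n:ℝ) - 1) / n * b + 4 * ((n:ℝ)-1)^2 / n^2 := by
      field_simp; ring
    rw [h3] at h1
    have hn2 : (0:ℝ) < (n:ℝ)^2 := by positivity
    calc (n:ℝ) * b ^ 2 + 4 * ((n:ℝ) - 1) * b - 4
        = ((b ^ 2 + 4 * ((n:ℝ) - 1) / n * b + 4 * ((n:ℝ)-1)^2 / n^2)
            - (2/n)^2 * ((n:ℝ)^2 - n + 1)) * n := by field_simp; ring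
      _ < 0 := by nlinarith
  -- Cauchy-Schwarz: (n Q - T s)^2 ≤ n (n F - T^2) s^2
  set P := (n:ℝ) * Q - T * s with hP_def
  set D := (n:ℝ) * F - T ^ 2 with hD_def
  have hCS : P ^ 2 ≤ (n:ℝ) * D * s ^ 2 := by
    have cs := Finset.sum_mul_sq_le_sq_mul_sq Finset.univ
      (fun p : Fin n × Fin n => h p.1 p.2 - T / n * (if p.1 = p.2 then (1:ℝ) else 0))
      (fun p : Fin n × Fin n => ξ p.1 * ξ p.2)
    have hA : (∑ p : Fin n × Fin n,
        (h p.1 p.2 - T / n * (if p.1 = p.2 then (1:ℝ) else 0)) ^ 2) = F - T ^ 2 / n := by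
      rw [Fintype.sum_prod_type]
      have inner : ∀ i : Fin n, (∑ j, (h i j - T / n * (if i = j then (1:ℝ) else 0)) ^ 2)
          = (∑ j, h i j * h i j) + (-(2 * (T/(n:ℝ))) * h i i + (T/(n:ℝ))^2) := by
        intro i
        have e1 : ∀ j, (h i j - T / n * (if i = j then (1:ℝ) else 0)) ^ 2
            = h i j * h i j + (if i = j then (-(2 * (T/(n:ℝ)) * h i j) + (T/(n:ℝ))^2) else 0) := by
          intro j; split <;> ring
        rw [Finset.sum_congr rfl fun j _ => e1 j, Finset.sum_add_distrib, Finset.sum_ite_eq]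
        simp
      rw [Finset.sum_congr rfl fun i _ => inner i, Finset.sum_add_distrib,
        Finset.sum_add_distrib, ← hF_def, ← Finset.mul_sum, ← hT_def,
        Finset.sum_const, Finset.card_univ, Fintype.card_fin, nsmul_eq_mul]
      field_simp
      ring
    have hB : (∑ p : Fin n × Fin n,
        (h p.1 p.2 - T / n * (if p.1 = p.2 then (1:ℝ) else 0)) * (ξ p.1 * ξ p.2))
        = Q - T / n * s := by
      rw [Fintype.sum_prod_type]
      have inner : ∀ i : Fin n, (∑ j, (h i j - T / n * (if i = j then (1:ℝ) else 0)) * (ξ i * ξ j))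
          = (∑ j, h i j * ξ i * ξ j) - T / n * (ξ i * ξ i) := by
        intro i
        have e1 : ∀ j, (h i j - T / n * (if i = j then (1:ℝ) else 0)) * (ξ i * ξ j)
            = h i j * ξ i * ξ j - T / n * (if i = j then ξ i * ξ j else 0) := by
          intro j; split <;> ring
        rw [Finset.sum_congr rfl fun j _ => e1 j, Finset.sum_sub_distrib,
          ← Finset.mul_sum, Finset.sum_ite_eq]
        simp
      rw [Finset.sum_congr rfl fun i _ => inner i, Finset.sum_sub_distrib,
        ← Finset.mul_sum, ← hQ_def, ← hs_def]
    have hC : (∑ p : Fin n × Fin n, (ξ p.1 * ξ p.2) ^ 2) = s * s := by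
      rw [Fintype.sum_prod_type, hs_def, Finset.sum_mul_sum]
      exact Finset.sum_congr rfl fun i _ => Finset.sum_congr rfl fun j _ => by ring
    rw [hA, hB, hC] at cs
    have e1 : (n:ℝ) * (Q - T / n * s) = P := by rw [hP_def]; field_simp
    have e2 : (n:ℝ) * (F - T ^ 2 / n) = D := by rw [hD_def]; field_simp
    have k1 : P ^ 2 = (n:ℝ)^2 * (Q - T / n * s) ^ 2 := by rw [← e1]; ring
    have k2 : (n:ℝ) * D * s ^ 2 = (n:ℝ)^2 * ((F - T ^ 2 / n) * (s * s)) := by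
      rw [← e2]; ring
    rw [k1, k2]
    exact mul_le_mul_of_nonneg_left cs (by positivity)
  clear_value s T Q F P D
  clear hgoal hs_def hT_def hQ_def hF_def hsymm hne hξ h ξ hb
  have hD0 : 0 ≤ D := by
    rcases le_or_gt 0 D with h' | h'
    · exact h'
    · nlinarith [le_trans (sq_nonneg P) hCS, mul_pos hn' (mul_pos hs hs)]
  -- conclude
  rcases eq_or_ne T 0 with hT | hT
  · rw [hT]; simpa using mul_pos hs hF
  · have hT2 : 0 < T ^ 2 := by positivity
    have hKpos : 0 < 4 + 4 * b - 4 * b * (n:ℝ) - (n:ℝ) * b ^ 2 := by nlinarith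
    have key : 4 * (n:ℝ) * s * ((n:ℝ) * (s * F - b * s * T * T + b * Q * T))
        = 4 * (n:ℝ) * s ^ 2 * D + 4 * (n:ℝ) * s ^ 2 * T ^ 2 * (1 + b - b * (n:ℝ))
          + ((2 * P + (n:ℝ) * s * b * T) ^ 2 - 4 * P ^ 2 - (n:ℝ)^2 * s ^ 2 * b ^ 2 * T ^ 2) := by
      rw [hP_def, hD_def]; ring
    have big : 0 < 4 * (n:ℝ) * s * ((n:ℝ) * (s * F - b * s * T * T + b * Q * T)) := by
      rw [key]
      have h3 : 0 < (n:ℝ) * (s ^ 2 * T ^ 2) * (4 + 4 * b - 4 * b * (n:ℝ) - (n:ℝ) * b ^ 2) :=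
        mul_pos (mul_pos hn' (mul_pos (pow_pos hs 2) hT2)) hKpos
      have h4 : 4 * (n:ℝ) * s ^ 2 * T ^ 2 * (1 + b - b * (n:ℝ)) - (n:ℝ)^2 * s ^ 2 * b ^ 2 * T ^ 2
          = (n:ℝ) * (s ^ 2 * T ^ 2) * (4 + 4 * b - 4 * b * (n:ℝ) - (n:ℝ) * b ^ 2) := by ring
      nlinarith [sq_nonneg (2 * P + (n:ℝ) * s * b * T), hCS, h3, h4]
    have h5 : (0:ℝ) < 4 * (n:ℝ) * (n:ℝ) * s := by positivity
    have h6 : 4 * (n:ℝ) * s * ((n:ℝ) * (s * F - b * s * T * T + b * Q * T))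
        = (4 * (n:ℝ) * (n:ℝ) * s) * (s * F - b * s * T * T + b * Q * T) := by ring
    rw [h6] at big
    exact pos_of_mul_pos_right big (by positivity)
end

section
/- For the standard G₂-structure (φ₀, ψ₀) on ℝ⁷ and any vector Y ∈ ℝ⁷, the interior product satisfies Y ⌟ ψ₀ = -(1/3)(Y ⌟ φ₀) ⋄ φ₀, where (A ⋄ φ)_{ijk} = A_{im}φ_{mjk} + A_{jm}φ_{imk} + A_{km}φ_{ijm} for a 2-tensor A. -/
/-- Kronecker delta on `Fin 7`. -/
def g2δ (a i : Fin 7) : ℝ := if a = i then 1 else 0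

/-- Component `(i,j,k)` of the basic 3-form `eᵃ ∧ eᵇ ∧ eᶜ` on `ℝ⁷`. -/
def g2triple (a b c i j k : Fin 7) : ℝ :=
  Matrix.det !![g2δ a i, g2δ a j, g2δ a k;
                g2δ b i, g2δ b j, g2δ b k;
                g2δ c i, g2δ c j, g2δ c k]

/-- Component `(i,j,k,l)` of the basic 4-form `eᵃ ∧ eᵇ ∧ eᶜ ∧ eᵈ` on `ℝ⁷`. -/
def g2quad (a b c d i j k l : Fin 7) : ℝ :=
  Matrix.det !![g2δ a i, g2δ a j, g2δ a k, g2δ a l;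
                g2δ b i, g2δ b j, g2δ b k, g2δ b l;
                g2δ c i, g2δ c j, g2δ c k, g2δ c l;
                g2δ d i, g2δ d j, g2δ d k, g2δ d l]

/-- Components of the standard G₂ 3-form
`φ₀ = e¹²³ + e¹⁴⁵ - e¹⁶⁷ + e²⁴⁶ - e²⁷⁵ + e³⁴⁷ - e³⁵⁶` on `ℝ⁷` (0-based indices). -/
def g2phi (i j k : Fin 7) : ℝ :=
  g2triple 0 1 2 i j k + g2triple 0 3 4 i j k - g2triple 0 5 6 i j k
    + g2triple 1 3 5 i j k - g2triple 1 6 4 i j k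
    + g2triple 2 3 6 i j k - g2triple 2 4 5 i j k

/-- Components of the dual 4-form
`ψ₀ = ⋆φ₀ = e⁴⁵⁶⁷ - e²³⁴⁵ + e²³⁶⁷ - e³¹⁴⁶ - e³¹⁵⁷ - e¹²⁴⁷ + e¹²⁵⁶` (0-based). -/
def g2psi (i j k l : Fin 7) : ℝ :=
  g2quad 3 4 5 6 i j k l - g2quad 1 2 3 4 i j k l + g2quad 1 2 5 6 i j k l
    - g2quad 2 0 3 5 i j k l - g2quad 2 0 4 6 i j k l
    - g2quad 0 1 3 6 i j k l + g2quad 0 1 4 5 i j k l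

/-- The Levi-Civita symbol on seven indices. -/
def g2eps (a b c d e f g : Fin 7) : ℝ :=
  Matrix.det (Matrix.of fun i j : Fin 7 => g2δ (![a, b, c, d, e, f, g] i) j)

/- Auxiliary integer-valued versions of the above, amenable to `decide`. -/

def g2δZ (a i : Fin 7) : ℤ := if a = i then 1 else 0

def g2tZ (a b c i j k : Fin 7) : ℤ :=
  g2δZ a i * (g2δZ b j * g2δZ c k - g2δZ b k * g2δZ c j)
    - g2δZ a j * (g2δZ b i * g2δZ c k - g2δZ b k * g2δZ c i)
    + g2δZ a k * (g2δZ b i * g2δZ c j - g2δZ b j * g2δZ c i)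

def g2qZ (a b c d i j k l : Fin 7) : ℤ :=
  g2δZ a i * g2tZ b c d j k l - g2δZ a j * g2tZ b c d i k l
    + g2δZ a k * g2tZ b c d i j l - g2δZ a l * g2tZ b c d i j k

def g2phiZ (i j k : Fin 7) : ℤ :=
  g2tZ 0 1 2 i j k + g2tZ 0 3 4 i j k - g2tZ 0 5 6 i j k
    + g2tZ 1 3 5 i j k - g2tZ 1 6 4 i j k
    + g2tZ 2 3 6 i j k - g2tZ 2 4 5 i j k

def g2psiZ (i j k l : Fin 7) : ℤ :=
  g2qZ 3 4 5 6 i j k l - g2qZ 1 2 3 4 i j k l + g2qZ 1 2 5 6 i j k l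
    - g2qZ 2 0 3 5 i j k l - g2qZ 2 0 4 6 i j k l
    - g2qZ 0 1 3 6 i j k l + g2qZ 0 1 4 5 i j k l

lemma g2δ_cast (a i : Fin 7) : g2δ a i = (g2δZ a i : ℝ) := by
  simp [g2δ, g2δZ, apply_ite]

lemma g2triple_cast (a b c i j k : Fin 7) :
    g2triple a b c i j k = (g2tZ a b c i j k : ℝ) := by
  simp [g2triple, Matrix.det_fin_three, g2δ_cast, g2tZ]
  ring

lemma g2quad_cast (a b c d i j k l : Fin 7) :
    g2quad a b c d i j k l = (g2qZ a b c d i j k l : ℝ) := by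
  simp [g2quad, Matrix.det_succ_row_zero, Fin.sum_univ_succ, Matrix.det_fin_three,
    Matrix.submatrix_apply, Fin.succAbove, Fin.lt_def, Fin.castSucc, Fin.castAdd, Fin.castLE,
    g2δ_cast, g2qZ, g2tZ, -Fin.val_fin_lt, -Fin.val_pos_iff]
  ring

lemma g2phi_cast (i j k : Fin 7) : g2phi i j k = (g2phiZ i j k : ℝ) := by
  simp [g2phi, g2phiZ, g2triple_cast]

lemma g2psi_cast (i j k l : Fin 7) : g2psi i j k l = (g2psiZ i j k l : ℝ) := by
  simp [g2psi, g2psiZ, g2quad_cast]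

set_option maxRecDepth 100000 in
set_option maxHeartbeats 8000000 in
lemma g2keyZ : ∀ p i j k : Fin 7,
    3 * g2psiZ p i j k
      + ((∑ m, g2phiZ p i m * g2phiZ m j k)
        + (∑ m, g2phiZ p j m * g2phiZ i m k)
        + (∑ m, g2phiZ p k m * g2phiZ i j m)) = 0 := by decide

lemma g2keyR (p i j k : Fin 7) :
    (g2psiZ p i j k : ℝ)
      = -(1 / 3 : ℝ) *
        ((∑ m, (g2phiZ p i m : ℝ) * (g2phiZ m j k : ℝ))
          + (∑ m, (g2phiZ p j m : ℝ) * (g2phiZ i m k : ℝ))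
          + (∑ m, (g2phiZ p k m : ℝ) * (g2phiZ i j m : ℝ))) := by
  have h := g2keyZ p i j k
  have h' : ((3 * g2psiZ p i j k
      + ((∑ m, g2phiZ p i m * g2phiZ m j k)
        + (∑ m, g2phiZ p j m * g2phiZ i m k)
        + (∑ m, g2phiZ p k m * g2phiZ i j m)) : ℤ) : ℝ) = 0 := by rw [h]; norm_num
  push_cast at h'
  linarith

/-- For the standard G₂-structure on `ℝ⁷` and any vector `Y`:
`Y ⌟ ψ₀ = -(1/3) (Y ⌟ φ₀) ⋄ φ₀`, where `(A ⋄ φ)_{ijk} = A_{im}φ_{mjk} +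
A_{jm}φ_{imk} + A_{km}φ_{ijm}`. -/
theorem stmt_18 (Y : Fin 7 → ℝ) (i j k : Fin 7) :
    ∑ m, Y m * g2psi m i j k
      = -(1 / 3 : ℝ) *
        ((∑ m, (∑ p, Y p * g2phi p i m) * g2phi m j k)
          + (∑ m, (∑ p, Y p * g2phi p j m) * g2phi i m k)
          + (∑ m, (∑ p, Y p * g2phi p k m) * g2phi i j m)) := by
  simp only [g2psi_cast, g2phi_cast, g2keyR, Fin.sum_univ_seven]
  ring
end
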